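/- arXiv:2512.22750 — 2 statements merged into one kernel-verified Lean document; each statement's English description precedes it below -/
import Mathlib

section
/- Let c_ν, c_γ > 0 with c_ν·c_γ ≥ 8, let 0.8 ≤ c_α ≤ 1 with c_α ≥ 1/(c_ν·c_γ) + 2/3, and define ν_k = c_ν·k^{1/3}, γ_k = c_γ·(k−1)^{1/3}, α_{k+1} = c_α·k^{−2/3}. Then for every integer k ≥ 3, 1/(2ν_k) + γ_{k+1}·(1 − α_{k+1}) − γ_k ≤ −(c_α·c_γ/2)·k^{−1/3}. -/
/-- With `ν_k = c_ν k^{1/3}`, `γ_k = c_γ (k−1)^{1/3}`, `γ_{k+1} = c_γ k^{1/3}`,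
`α_{k+1} = c_α k^{−2/3}`: for every integer `k ≥ 2`, `k ≠ 2`,
`1/(2ν_k) + γ_{k+1}(1 − α_{k+1}) − γ_k ≤ −(c_α c_γ/2) k^{−1/3}`. -/
theorem stmt_6 (cν cγ cα : ℝ) (hcν : 0 < cν) (hcγ : 0 < cγ)
    (hprod : 8 ≤ cν * cγ) (hcα1 : 0.8 ≤ cα) (hcα2 : cα ≤ 1)
    (hcα3 : 1 / (cν * cγ) + 2 / 3 ≤ cα)
    (k : ℕ) (hk : 2 ≤ k) (hk2 : k ≠ 2) :
    1 / (2 * (cν * (k : ℝ) ^ ((1 : ℝ) / 3))) +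
        cγ * (k : ℝ) ^ ((1 : ℝ) / 3) * (1 - cα * (k : ℝ) ^ (-(2 : ℝ) / 3)) -
        cγ * ((k : ℝ) - 1) ^ ((1 : ℝ) / 3) ≤
      -(cα * cγ / 2) * (k : ℝ) ^ (-(1 : ℝ) / 3) := by
  have hk3 : 3 ≤ k := by omega
  have hK : (3 : ℝ) ≤ (k : ℝ) := by exact_mod_cast hk3
  have hK0 : (0 : ℝ) < (k : ℝ) := by linarith
  have hK1 : (0 : ℝ) < (k : ℝ) - 1 := by linarith
  set K : ℝ := (k : ℝ) with hKdef
  set a : ℝ := K ^ ((1 : ℝ) / 3) with hadef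
  set b : ℝ := (K - 1) ^ ((1 : ℝ) / 3) with hbdef
  have ha : 0 < a := Real.rpow_pos_of_pos hK0 _
  have hb : 0 < b := Real.rpow_pos_of_pos hK1 _
  have ha3 : a ^ 3 = K := by
    rw [hadef, ← Real.rpow_natCast (K ^ ((1:ℝ)/3)) 3, ← Real.rpow_mul hK0.le]
    norm_num
  have hb3 : b ^ 3 = K - 1 := by
    rw [hbdef, ← Real.rpow_natCast ((K-1) ^ ((1:ℝ)/3)) 3, ← Real.rpow_mul hK1.le]
    norm_num
  have hneg2 : K ^ (-(2 : ℝ) / 3) = (a ^ 2)⁻¹ := by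
    rw [hadef, ← Real.rpow_natCast (K ^ ((1:ℝ)/3)) 2, ← Real.rpow_mul hK0.le,
      ← Real.rpow_neg hK0.le]
    norm_num
  have hneg1 : K ^ (-(1 : ℝ) / 3) = a⁻¹ := by
    rw [hadef, ← Real.rpow_neg hK0.le]
    norm_num
  -- a ≤ b^2
  have hba : a ≤ b ^ 2 := by
    have h3 : a ^ 3 ≤ (b ^ 2) ^ 3 := by
      have : (b ^ 2) ^ 3 = (K - 1) ^ 2 := by
        rw [← pow_mul, show 2 * 3 = 3 * 2 by ring, pow_mul, hb3]
      rw [this, ha3]; nlinarith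
    exact le_of_pow_le_pow_left₀ (by norm_num) (sq_nonneg b) h3
  have hbale : b ≤ a := by
    have h3 : b ^ 3 ≤ a ^ 3 := by rw [ha3, hb3]; linarith
    exact le_of_pow_le_pow_left₀ (by norm_num) ha.le h3
  -- a - b ≤ 1/(3 b^2)
  have hab : (a - b) * (3 * b ^ 2) ≤ 1 := by
    have key : 0 ≤ (a - b) ^ 2 * (a + 2 * b) := by positivity
    nlinarith [key, ha3, hb3]
  have h1 : a - b ≤ 1 / (3 * a) := by
    rw [sub_le_iff_le_add]
    have h2 : (a - b) ≤ 1 / (3 * b ^ 2) := by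
      rw [le_div_iff₀ (by positivity)]; linarith
    have h3 : 1 / (3 * b ^ 2) ≤ 1 / (3 * a) := by
      apply one_div_le_one_div_of_le (by positivity); linarith
    linarith
  -- coefficient inequality
  have h2 : 1 / cν + 2 * cγ / 3 ≤ cα * cγ := by
    have h := mul_le_mul_of_nonneg_right hcα3 hcγ.le
    rw [add_mul] at h
    have e : 1 / (cν * cγ) * cγ = 1 / cν := by
      field_simp
    rw [e] at h
    linarith
  rw [hneg2, hneg1]
  have ha' : a ≠ 0 := ha.ne'
  rw [show 1 / (2 * (cν * a)) + cγ * a * (1 - cα * (a ^ 2)⁻¹) - cγ * b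
      = (1 / (2 * cν) + cγ * a * (a - b) - cα * cγ) / a by field_simp; ring,
    show -(cα * cγ / 2) * a⁻¹ = (-(cα * cγ / 2)) / a from (div_eq_mul_inv (-(cα * cγ / 2)) a).symm]
  apply (div_le_div_iff_of_pos_right ha).mpr
  have h4 : cγ * a * (a - b) ≤ cγ / 3 := by
    have h5 := mul_le_mul_of_nonneg_left h1 (by positivity : (0:ℝ) ≤ cγ * a)
    have h6 : cγ * a * (1 / (3 * a)) = cγ / 3 := by field_simp
    linarith [h5, h6.le, h6.ge]
  have e2 : 1 / (2 * cν) = 1 / cν / 2 := by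
    field_simp
  linarith
end

section
/- Let f : ℝ^n → ℝ have L-Lipschitz continuous gradient on a convex set containing points x and R_x(η), where ‖R_x(η) − x‖ ≤ p‖η‖ and ‖R_x(η) − x − η‖ ≤ q‖η‖², and suppose ‖∇f(z)‖ ≤ G for all z in the segment. Then f(R_x(η)) ≤ f(x) + ⟨∇f(x), η⟩ + ((L·p² + 2qG)/2)·‖η‖². -/
/-!
Along the segment `t ↦ x + t • (Rx - x)`, the Lipschitz bound on `∇f` controls the derivative of
`t ↦ f (x + t • (Rx - x))` by `⟪∇f x, Rx - x⟫ + L t ‖Rx - x‖²`; integrating gives the descent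
lemma `f Rx ≤ f x + ⟪∇f x, Rx - x⟫ + (L / 2) ‖Rx - x‖²`. The first retraction bound turns
`‖Rx - x‖²` into `p² ‖η‖²`, and the second, together with `‖∇f x‖ ≤ G`, replaces
`⟪∇f x, Rx - x⟫` by `⟪∇f x, η⟫` at the cost of `q G ‖η‖²`.
-/

open InnerProductSpace

section Descent

variable {E : Type*} [NormedAddCommGroup E] [InnerProductSpace ℝ E] [CompleteSpace E]
  {f : E → ℝ}

theorem HasGradientAt.hasDerivAt_comp_add_smul {g x v : E} {t : ℝ}
    (h : HasGradientAt f g (x + t • v)) :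
    HasDerivAt (fun t : ℝ => f (x + t • v)) (inner ℝ g v) t := by
  have hline : HasDerivAt (fun t : ℝ => x + t • v) v t := by
    simpa using ((hasDerivAt_id t).smul_const v).const_add x
  have := h.hasFDerivAt.comp_hasDerivAt t hline
  rwa [toDual_apply_apply] at this

theorem le_add_inner_gradient_add_half_mul_norm_sq {L : ℝ} {x y : E}
    (hdiff : ∀ z ∈ segment ℝ x y, DifferentiableAt ℝ f z)
    (hlip : ∀ z ∈ segment ℝ x y, ‖gradient f z - gradient f x‖ ≤ L * ‖z - x‖) :
    f y ≤ f x + inner ℝ (gradient f x) (y - x) + L / 2 * ‖y - x‖ ^ 2 := by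
  set v := y - x
  have hmem : ∀ t ∈ Set.Icc (0 : ℝ) 1, x + t • v ∈ segment ℝ x y := fun t ht => by
    rw [segment_eq_image']
    exact ⟨t, ht, rfl⟩
  set φ : ℝ → ℝ := fun t =>
    f (x + t • v) - t * inner ℝ (gradient f x) v - L / 2 * t ^ 2 * ‖v‖ ^ 2
  have hφ : ∀ t ∈ Set.Icc (0 : ℝ) 1, HasDerivAt φ
      (inner ℝ (gradient f (x + t • v) - gradient f x) v - L * t * ‖v‖ ^ 2) t := by
    intro t ht
    have hf := (hdiff _ (hmem t ht)).hasGradientAt.hasDerivAt_comp_add_smul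
    have hlin := (hasDerivAt_id t).mul_const (inner ℝ (gradient f x) v)
    have hquad := ((hasDerivAt_pow 2 t).const_mul (L / 2)).mul_const (‖v‖ ^ 2)
    refine ((hf.sub hlin).sub hquad).congr_deriv ?_
    rw [inner_sub_left]
    simp only [Nat.cast_ofNat]
    ring
  have hφ_anti : AntitoneOn φ (Set.Icc 0 1) := by
    refine antitoneOn_of_hasDerivWithinAt_nonpos (convex_Icc 0 1)
      (fun t ht => (hφ t ht).continuousAt.continuousWithinAt)
      (fun t ht => (hφ t (interior_subset ht)).hasDerivWithinAt) fun t ht => ?_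
    have ht := interior_subset ht
    calc inner ℝ (gradient f (x + t • v) - gradient f x) v - L * t * ‖v‖ ^ 2
        ≤ L * ‖x + t • v - x‖ * ‖v‖ - L * t * ‖v‖ ^ 2 := by
          gcongr
          exact (real_inner_le_norm _ _).trans
            (mul_le_mul_of_nonneg_right (hlip _ (hmem t ht)) (norm_nonneg v))
      _ = 0 := by
          rw [add_sub_cancel_left, norm_smul, Real.norm_of_nonneg ht.1]
          ring
  have hφ_one_le := hφ_anti (Set.left_mem_Icc.2 zero_le_one) (Set.right_mem_Icc.2 zero_le_one)
    zero_le_one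
  simp only [φ, v, one_smul, add_sub_cancel, zero_smul, add_zero] at hφ_one_le
  linarith

end Descent

theorem stmt_7_general (n : ℕ) (f : EuclideanSpace ℝ (Fin n) → ℝ)
    (s : Set (EuclideanSpace ℝ (Fin n))) (hs : Convex ℝ s)
    (L p q G : ℝ) (hL : 0 ≤ L)
    (x η Rx : EuclideanSpace ℝ (Fin n)) (hx : x ∈ s) (hRx : Rx ∈ s)
    (hdiff : ∀ z ∈ s, DifferentiableAt ℝ f z)
    (hlip : ∀ z ∈ s, ∀ w ∈ s, ‖gradient f z - gradient f w‖ ≤ L * ‖z - w‖)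
    (hret1 : ‖Rx - x‖ ≤ p * ‖η‖) (hret2 : ‖Rx - x - η‖ ≤ q * ‖η‖ ^ 2)
    (hgradbd : ∀ z ∈ segment ℝ x Rx, ‖gradient f z‖ ≤ G) :
    f Rx ≤ f x + inner ℝ (gradient f x) η + ((L * p ^ 2 + 2 * q * G) / 2) * ‖η‖ ^ 2 := by
  have hseg := hs.segment_subset hx hRx
  have hdescent := le_add_inner_gradient_add_half_mul_norm_sq (fun z hz => hdiff z (hseg hz))
    (fun z hz => hlip z (hseg hz) x hx)
  have hGx := hgradbd x (left_mem_segment ℝ x Rx)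
  have hinner : inner ℝ (gradient f x) (Rx - x) ≤ inner ℝ (gradient f x) η + q * G * ‖η‖ ^ 2 :=
    calc inner ℝ (gradient f x) (Rx - x)
        = inner ℝ (gradient f x) η + inner ℝ (gradient f x) (Rx - x - η) := by
          rw [← inner_add_right, add_sub_cancel]
      _ ≤ inner ℝ (gradient f x) η + ‖gradient f x‖ * ‖Rx - x - η‖ := by
          gcongr
          exact real_inner_le_norm _ _
      _ ≤ inner ℝ (gradient f x) η + G * (q * ‖η‖ ^ 2) := by
          gcongr
          exact (norm_nonneg _).trans hGx
      _ = inner ℝ (gradient f x) η + q * G * ‖η‖ ^ 2 := by ring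
  have hsq : ‖Rx - x‖ ^ 2 ≤ p ^ 2 * ‖η‖ ^ 2 := by
    rw [← mul_pow]
    exact pow_le_pow_left₀ (norm_nonneg _) hret1 2
  linarith [mul_le_mul_of_nonneg_left hsq (div_nonneg hL zero_le_two)]

/-- Retraction smoothness: if `f` has `L`-Lipschitz gradient on a convex set `s`
containing `x` and the retracted point `Rx = R_x(η)`, with the retraction bounds
`‖Rx − x‖ ≤ p‖η‖` and `‖Rx − x − η‖ ≤ q‖η‖²`, and `‖∇f(z)‖ ≤ G` on the segment
from `x` to `Rx`, then `f(Rx) ≤ f(x) + ⟨∇f(x), η⟩ + ((L p² + 2 q G)/2)‖η‖²`. -/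
theorem stmt_7 (n : ℕ) (f : EuclideanSpace ℝ (Fin n) → ℝ)
    (s : Set (EuclideanSpace ℝ (Fin n))) (hs : Convex ℝ s)
    (L p q G : ℝ) (hL : 0 ≤ L) (hp : 0 < p) (hq : 0 < q) (hG : 0 ≤ G)
    (x η Rx : EuclideanSpace ℝ (Fin n)) (hx : x ∈ s) (hRx : Rx ∈ s)
    (hdiff : ∀ z ∈ s, DifferentiableAt ℝ f z)
    (hlip : ∀ z ∈ s, ∀ w ∈ s, ‖gradient f z - gradient f w‖ ≤ L * ‖z - w‖)
    (hret1 : ‖Rx - x‖ ≤ p * ‖η‖) (hret2 : ‖Rx - x - η‖ ≤ q * ‖η‖ ^ 2)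
    (hgradbd : ∀ z ∈ segment ℝ x Rx, ‖gradient f z‖ ≤ G) :
    f Rx ≤ f x + inner ℝ (gradient f x) η + ((L * p ^ 2 + 2 * q * G) / 2) * ‖η‖ ^ 2 :=
  stmt_7_general n f s hs L p q G hL x η Rx hx hRx hdiff hlip hret1 hret2 hgradbd
end
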